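/- Let Ω ⊂ ℝ^n be a bounded smooth domain, f a smooth function on ∂Ω with harmonic extension f_H, N the Dirichlet-Neumann operator, κ the mean curvature, and N_H the harmonic extension of the unit normal. Then on ∂Ω: (-Δ_{∂Ω} - N^2) f = κ N(f) - 2 ∂_ν (-Δ)^{-1}(DN_H · D^2 f_H) - N(N) · (N(f) ν + ∇^⊤ f), where N(N) denotes the componentwise Dirichlet-Neumann operator applied to the unit normal ν. -/

import Mathlib

open scoped RealInnerProductSpace

/-- The Euclidean Laplacian `Δu = ∑ ∂²u/∂xᵢ²` on `ℝⁿ`. -/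
noncomputable def eucLap {n : ℕ} (u : EuclideanSpace ℝ (Fin n) → ℝ)
    (x : EuclideanSpace ℝ (Fin n)) : ℝ :=
  ∑ i, fderiv ℝ (fun z => fderiv ℝ u z (EuclideanSpace.single i 1)) x
    (EuclideanSpace.single i 1)

namespace Stmt10Aux

variable {n : ℕ}
local notation "E" => EuclideanSpace ℝ (Fin n)

lemma dcont {u : E → ℝ} (hu : ContDiff ℝ (⊤ : ℕ∞) u) (v : E) :
    ContDiff ℝ (⊤ : ℕ∞) (fun y => fderiv ℝ u y v) :=
  (hu.fderiv_right (by simp)).clm_apply contDiff_const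

lemma eucLap_continuous {u : E → ℝ} (hu : ContDiff ℝ (⊤ : ℕ∞) u) :
    Continuous (eucLap u) :=
  continuous_finset_sum _ fun _ _ => (dcont (dcont hu _) _).continuous

lemma sum_apply' (f : Fin n → E) (k : Fin n) : (∑ x : Fin n, f x) k = ∑ x, f x k := by
  induction (Finset.univ : Finset (Fin n)) using Finset.induction with
  | empty => rfl
  | insert _ _ h ih => rw [Finset.sum_insert h, Finset.sum_insert h, PiLp.add_apply, ih]

lemma euclidean_decomp (v : E) : v = ∑ j, v j • EuclideanSpace.single j 1 := by
  ext k
  rw [sum_apply']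
  simp [EuclideanSpace.single_apply]

lemma fderiv_dir {u : E → ℝ} {x : E} (v : E) :
    fderiv ℝ u x v = ∑ j, v j * fderiv ℝ u x (EuclideanSpace.single j 1) := by
  conv_lhs => rw [euclidean_decomp v]
  rw [map_sum]
  simp

lemma fderiv_fderiv_apply {u : E → ℝ} (hu : ContDiff ℝ (⊤ : ℕ∞) u) (x v w : E) :
    fderiv ℝ (fun y => fderiv ℝ u y v) x w = fderiv ℝ (fderiv ℝ u) x w v := by
  have hdu : Differentiable ℝ (fderiv ℝ u) := (hu.fderiv_right (m := (⊤ : ℕ∞)) (by simp)).differentiable (by simp)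
  have : fderiv ℝ (fun y => (ContinuousLinearMap.apply ℝ ℝ v) (fderiv ℝ u y)) x
      = (ContinuousLinearMap.apply ℝ ℝ v).comp (fderiv ℝ (fderiv ℝ u) x) :=
    ((ContinuousLinearMap.apply ℝ ℝ v).hasFDerivAt.comp x (hdu x).hasFDerivAt).fderiv
  have h2 : (fun y => fderiv ℝ u y v)
      = fun y => (ContinuousLinearMap.apply ℝ ℝ v) (fderiv ℝ u y) := rfl
  rw [h2, this]
  rfl

lemma fderiv_swap {u : E → ℝ} (hu : ContDiff ℝ (⊤ : ℕ∞) u) (x v w : E) :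
    fderiv ℝ (fun y => fderiv ℝ u y v) x w = fderiv ℝ (fun y => fderiv ℝ u y w) x v := by
  rw [fderiv_fderiv_apply hu, fderiv_fderiv_apply hu]
  exact (second_derivative_symmetric (fun y => (hu.differentiable (by simp) y).hasFDerivAt)
    ((((hu.fderiv_right (m := (⊤ : ℕ∞)) (by simp)).differentiable (by simp)) x).hasFDerivAt) v w).symm

lemma d1_add {u v : E → ℝ} (hu : ContDiff ℝ (⊤ : ℕ∞) u) (hv : ContDiff ℝ (⊤ : ℕ∞) v) (w : E) :
    (fun y => fderiv ℝ (fun z => u z + v z) y w)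
      = fun y => fderiv ℝ u y w + fderiv ℝ v y w := by
  funext y
  rw [fderiv_fun_add (hu.differentiable (by simp) y) (hv.differentiable (by simp) y)]
  rfl

lemma eucLap_add {u v : E → ℝ} (hu : ContDiff ℝ (⊤ : ℕ∞) u) (hv : ContDiff ℝ (⊤ : ℕ∞) v) (x : E) :
    eucLap (fun y => u y + v y) x = eucLap u x + eucLap v x := by
  unfold eucLap
  rw [← Finset.sum_add_distrib]
  refine Finset.sum_congr rfl fun i _ => ?_
  rw [d1_add hu hv, fderiv_fun_add ((dcont hu _).differentiable (by simp) x)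
    ((dcont hv _).differentiable (by simp) x)]
  rfl

lemma d1_cmul {u : E → ℝ} (hu : ContDiff ℝ (⊤ : ℕ∞) u) (c : ℝ) (w : E) :
    (fun y => fderiv ℝ (fun z => c * u z) y w) = fun y => c * fderiv ℝ u y w := by
  funext y
  rw [fderiv_const_mul (hu.differentiable (by simp) y) c]
  rfl

lemma eucLap_cmul {u : E → ℝ} (hu : ContDiff ℝ (⊤ : ℕ∞) u) (c : ℝ) (x : E) :
    eucLap (fun y => c * u y) x = c * eucLap u x := by
  unfold eucLap
  rw [Finset.mul_sum]
  refine Finset.sum_congr rfl fun i _ => ?_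
  rw [d1_cmul hu, fderiv_const_mul ((dcont hu _).differentiable (by simp) x)]
  rfl

lemma eucLap_neg {u : E → ℝ} (hu : ContDiff ℝ (⊤ : ℕ∞) u) (x : E) :
    eucLap (fun y => -u y) x = -eucLap u x := by
  have := eucLap_cmul hu (-1) x
  simpa using this

lemma eucLap_sub {u v : E → ℝ} (hu : ContDiff ℝ (⊤ : ℕ∞) u) (hv : ContDiff ℝ (⊤ : ℕ∞) v) (x : E) :
    eucLap (fun y => u y - v y) x = eucLap u x - eucLap v x := by
  have := eucLap_add hu ((contDiff_const (c := (-1:ℝ))).mul hv) x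
  simp only [sub_eq_add_neg]
  rw [show (fun y => u y + -v y) = fun y => u y + (-1) * v y by funext y; ring, this,
    eucLap_cmul hv]
  ring

lemma eucLap_const (c : ℝ) (x : E) : eucLap (fun _ : E => c) x = 0 := by
  unfold eucLap
  simp [fderiv_const]

lemma eucLap_sum {ι : Type*} [DecidableEq ι] (s : Finset ι) (F : ι → E → ℝ)
    (hF : ∀ j ∈ s, ContDiff ℝ (⊤ : ℕ∞) (F j)) (x : E) :
    eucLap (fun y => ∑ j ∈ s, F j y) x = ∑ j ∈ s, eucLap (F j) x := by
  induction s using Finset.induction with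
  | empty => simpa using eucLap_const 0 x
  | @insert a s ha ih =>
    rw [Finset.sum_insert ha,
      show (fun y => ∑ j ∈ insert a s, F j y) = fun y => F a y + ∑ j ∈ s, F j y by
        funext y; rw [Finset.sum_insert ha],
      eucLap_add (hF a (Finset.mem_insert_self a s))
        (ContDiff.sum fun j hj => hF j (Finset.mem_insert_of_mem hj)) x,
      ih fun j hj => hF j (Finset.mem_insert_of_mem hj)]

lemma d1_mul {a b : E → ℝ} (ha : ContDiff ℝ (⊤ : ℕ∞) a) (hb : ContDiff ℝ (⊤ : ℕ∞) b) (w : E) :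
    (fun y => fderiv ℝ (fun z => a z * b z) y w)
      = fun y => a y * fderiv ℝ b y w + b y * fderiv ℝ a y w := by
  funext y
  rw [fderiv_fun_mul (ha.differentiable (by simp) y) (hb.differentiable (by simp) y)]
  simp

lemma eucLap_mul {a b : E → ℝ} (ha : ContDiff ℝ (⊤ : ℕ∞) a) (hb : ContDiff ℝ (⊤ : ℕ∞) b) (x : E) :
    eucLap (fun y => a y * b y) x
      = a x * eucLap b x + b x * eucLap a x
        + 2 * ∑ i, fderiv ℝ a x (EuclideanSpace.single i 1)
            * fderiv ℝ b x (EuclideanSpace.single i 1) := by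
  unfold eucLap
  have key : ∀ i : Fin n,
      fderiv ℝ (fun z => fderiv ℝ (fun y => a y * b y) z (EuclideanSpace.single i 1)) x
          (EuclideanSpace.single i 1)
        = a x * fderiv ℝ (fun z => fderiv ℝ b z (EuclideanSpace.single i 1)) x
            (EuclideanSpace.single i 1)
          + b x * fderiv ℝ (fun z => fderiv ℝ a z (EuclideanSpace.single i 1)) x
            (EuclideanSpace.single i 1)
          + 2 * (fderiv ℝ a x (EuclideanSpace.single i 1)
            * fderiv ℝ b x (EuclideanSpace.single i 1)) := by
    intro i
    set e := EuclideanSpace.single i (1:ℝ)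
    rw [d1_mul ha hb]
    have hae : DifferentiableAt ℝ a x := ha.differentiable (by simp) x
    have hbe : DifferentiableAt ℝ b x := hb.differentiable (by simp) x
    have hda : DifferentiableAt ℝ (fun y => fderiv ℝ a y e) x :=
      (dcont ha e).differentiable (by simp) x
    have hdb : DifferentiableAt ℝ (fun y => fderiv ℝ b y e) x :=
      (dcont hb e).differentiable (by simp) x
    rw [fderiv_fun_add (hae.fun_mul hdb) (hbe.fun_mul hda), fderiv_fun_mul hae hdb, fderiv_fun_mul hbe hda]
    simp only [ContinuousLinearMap.add_apply, ContinuousLinearMap.smul_apply, smul_eq_mul]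
    ring
  rw [Finset.sum_congr rfl (fun i _ => key i), Finset.sum_add_distrib, Finset.sum_add_distrib,
    ← Finset.mul_sum, ← Finset.mul_sum, ← Finset.mul_sum]

lemma eucLap_fderiv_zero {u : E → ℝ} (hu : ContDiff ℝ (⊤ : ℕ∞) u) {Ω : Set E} (hΩ : IsOpen Ω)
    (h : ∀ x ∈ Ω, eucLap u x = 0) (v : E) :
    ∀ x ∈ Ω, eucLap (fun y => fderiv ℝ u y v) x = 0 := by
  intro x hx
  have key : eucLap (fun y => fderiv ℝ u y v) x = fderiv ℝ (eucLap u) x v := by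
    unfold eucLap
    have step : ∀ i : Fin n,
        fderiv ℝ (fun z => fderiv ℝ (fun y => fderiv ℝ u y v) z (EuclideanSpace.single i 1)) x
            (EuclideanSpace.single i 1)
          = fderiv ℝ (fun z => fderiv ℝ (fun y => fderiv ℝ u y (EuclideanSpace.single i 1)) z
              (EuclideanSpace.single i 1)) x v := by
      intro i
      have e1 : (fun z => fderiv ℝ (fun y => fderiv ℝ u y v) z (EuclideanSpace.single i 1))
          = fun z => fderiv ℝ (fun y => fderiv ℝ u y (EuclideanSpace.single i 1)) z v := by
        funext z; exact fderiv_swap hu z v _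
      rw [e1, fderiv_swap (dcont hu _) x v _]
    rw [Finset.sum_congr rfl fun i _ => step i]
    rw [show (fun z => ∑ i : Fin n, fderiv ℝ
        (fun y => fderiv ℝ u y (EuclideanSpace.single i 1)) z (EuclideanSpace.single i 1))
      = eucLap u from rfl] at *
    rw [← ContinuousLinearMap.sum_apply, ← fderiv_fun_sum fun i _ =>
      (dcont (dcont hu _) _).differentiable (by simp) x]
    rfl
  rw [key]
  have hev : eucLap u =ᶠ[nhds x] (fun _ => (0:ℝ)) :=
    Filter.eventuallyEq_of_mem (hΩ.mem_nhds hx) h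
  rw [hev.fderiv_eq, fderiv_fun_const]
  rfl

lemma contDiff_deriv_1d {g : ℝ → ℝ} (hg : ContDiff ℝ (⊤ : ℕ∞) g) : ContDiff ℝ (⊤ : ℕ∞) (deriv g) := by
  have : deriv g = fun t => fderiv ℝ g t 1 := by
    funext t; rw [fderiv_apply_one_eq_deriv]
  rw [this]
  exact (hg.fderiv_right (by simp)).clm_apply contDiff_const

lemma sd_test {g : ℝ → ℝ} (hg : ContDiff ℝ (⊤ : ℕ∞) g) (hmax : IsLocalMax g 0) :
    deriv (deriv g) 0 ≤ 0 := by
  by_contra hcon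
  push_neg at hcon
  have h1 : deriv g 0 = 0 := hmax.deriv_eq_zero
  have hd : HasDerivAt (deriv g) (deriv (deriv g) 0) 0 :=
    ((contDiff_deriv_1d hg).differentiable (by simp) 0).hasDerivAt
  have hslope : Filter.Tendsto (fun t => deriv g t / t) (nhdsWithin 0 {(0:ℝ)}ᶜ)
      (nhds (deriv (deriv g) 0)) := by
    have := hasDerivAt_iff_tendsto_slope.mp hd
    simpa [slope_fun_def_field, h1] using this
  have hpos : ∀ᶠ t in nhdsWithin 0 {(0:ℝ)}ᶜ, 0 < deriv g t / t :=
    hslope.eventually (eventually_gt_nhds hcon)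
  have hpos' : ∀ᶠ t in nhdsWithin (0:ℝ) (Set.Ioi 0), 0 < deriv g t := by
    have hsub : nhdsWithin (0:ℝ) (Set.Ioi 0) ≤ nhdsWithin 0 {(0:ℝ)}ᶜ :=
      nhdsWithin_mono 0 (fun t ht => ne_of_gt ht)
    filter_upwards [hsub hpos, self_mem_nhdsWithin] with t ht ht'
    have htpos : (0:ℝ) < t := ht'
    rcases div_pos_iff.mp ht with ⟨h, _⟩ | ⟨_, h2⟩
    · exact h
    · linarith
  rw [eventually_nhdsWithin_iff, Metric.eventually_nhds_iff] at hpos'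
  obtain ⟨δ, hδ, hder⟩ := hpos'
  obtain ⟨δ', hδ', hmax'⟩ := Metric.eventually_nhds_iff.mp hmax
  set r := min δ δ' / 2 with hr
  have hr0 : 0 < r := by positivity
  have mono : StrictMonoOn g (Set.Icc 0 r) := by
    apply strictMonoOn_of_deriv_pos (convex_Icc 0 r) (hg.continuous.continuousOn)
    intro t ht
    rw [interior_Icc] at ht
    refine hder ?_ ht.1
    rw [Real.dist_eq, sub_zero, abs_of_pos ht.1]
    have h3 : r < δ := by
      have := min_le_left δ δ'
      simp only [hr]; linarith
    linarith [ht.2]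
  have hlt : g 0 < g r := mono (Set.left_mem_Icc.mpr hr0.le) (Set.right_mem_Icc.mpr hr0.le) hr0
  have hle : g r ≤ g 0 := by
    apply hmax'
    rw [Real.dist_eq, sub_zero, abs_of_pos hr0]
    have := min_le_right δ δ'
    simp only [hr]; linarith
  linarith

lemma eucLap_localmax {u : E → ℝ} (hu : ContDiff ℝ (⊤ : ℕ∞) u) {x₀ : E}
    (hmax : IsLocalMax u x₀) : eucLap u x₀ ≤ 0 := by
  have key : ∀ v : E, fderiv ℝ (fun y => fderiv ℝ u y v) x₀ v ≤ 0 := by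
    intro v
    set L : ℝ → E := fun t => x₀ + t • v with hL
    have hLd : ∀ t, HasDerivAt L v t := by
      intro t
      have : HasDerivAt (fun s : ℝ => s • v) ((1:ℝ) • v) t := (hasDerivAt_id t).smul_const v
      exact (by simpa using this : HasDerivAt (fun s : ℝ => s • v) v t).const_add x₀
    have hLc : Continuous L := by fun_prop
    have hL0 : L 0 = x₀ := by simp [hL]
    have hgC : ContDiff ℝ (⊤ : ℕ∞) (fun t => u (L t)) :=
      hu.comp (contDiff_const.add (contDiff_id.smul contDiff_const))
    have hgmax : IsLocalMax (fun t => u (L t)) 0 := by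
      have hev := (hLc.tendsto 0).eventually (p := fun y => u y ≤ u x₀)
        (by rw [hL0] at *; exact hmax)
      refine hev.mono fun t ht => ?_
      show u (L t) ≤ u (L 0)
      rw [hL0]; exact ht
    have hderiv : deriv (fun t => u (L t)) = fun t => fderiv ℝ u (L t) v := by
      funext t
      exact (((hu.differentiable (by simp) (L t)).hasFDerivAt).comp_hasDerivAt t (hLd t)).deriv
    have hderiv2 : deriv (deriv (fun t => u (L t))) 0
        = fderiv ℝ (fun y => fderiv ℝ u y v) x₀ v := by
      rw [hderiv]
      have : HasDerivAt (fun t => fderiv ℝ u (L t) v)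
          (fderiv ℝ (fun y => fderiv ℝ u y v) (L 0) v) 0 :=
        ((((dcont hu v).differentiable (by simp)) (L 0)).hasFDerivAt).comp_hasDerivAt 0 (hLd 0)
      rw [← hL0]
      exact this.deriv
    have := sd_test hgC hgmax
    rwa [hderiv2] at this
  exact Finset.sum_nonpos fun i _ => key _

noncomputable def sqnorm (n : ℕ) : EuclideanSpace ℝ (Fin n) → ℝ := fun y => ∑ i, y i * y i

lemma proj_contDiff (i : Fin n) : ContDiff ℝ (⊤ : ℕ∞) (fun y : E => y i) :=
  (EuclideanSpace.proj i : EuclideanSpace ℝ (Fin n) →L[ℝ] ℝ).contDiff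

lemma fderiv_proj (i : Fin n) (z w : E) : fderiv ℝ (fun y : E => y i) z w = w i := by
  rw [show (fun y : E => y i)
      = ((EuclideanSpace.proj i : EuclideanSpace ℝ (Fin n) →L[ℝ] ℝ) : E → ℝ) from rfl,
    ContinuousLinearMap.fderiv]
  rfl

lemma sqnorm_contDiff : ContDiff ℝ (⊤ : ℕ∞) (sqnorm n) :=
  ContDiff.sum fun i _ => (proj_contDiff i).mul (proj_contDiff i)

lemma eucLap_proj (i : Fin n) (x : E) : eucLap (fun y : E => y i) x = 0 := by
  unfold eucLap
  have : ∀ j : Fin n, (fun z : E => fderiv ℝ (fun y : E => y i) z (EuclideanSpace.single j 1))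
      = fun _ => (EuclideanSpace.single j (1:ℝ)) i := by
    intro j; funext z; rw [fderiv_proj]
  refine Finset.sum_eq_zero fun j _ => ?_
  rw [this j, fderiv_fun_const]
  rfl

lemma eucLap_sqnorm (x : E) : eucLap (sqnorm n) x = 2 * n := by
  unfold sqnorm
  rw [eucLap_sum Finset.univ _ (fun i _ => (proj_contDiff i).mul (proj_contDiff i)) x]
  have key : ∀ i : Fin n, eucLap (fun y : E => y i * y i) x = 2 := by
    intro i
    rw [eucLap_mul (proj_contDiff i) (proj_contDiff i), eucLap_proj]
    have : ∀ j : Fin n, fderiv ℝ (fun y : E => y i) x (EuclideanSpace.single j 1)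
        * fderiv ℝ (fun y : E => y i) x (EuclideanSpace.single j 1)
        = if j = i then 1 else 0 := by
      intro j
      rw [fderiv_proj, EuclideanSpace.single_apply]
      by_cases hji : j = i
      · simp [hji]
      · simp only [hji, if_false]
        rw [if_neg (fun hij => hji hij.symm)]
        ring
    rw [Finset.sum_congr rfl fun j _ => this j]
    simp
  rw [Finset.sum_congr rfl fun i _ => key i]
  simp [mul_comm]

lemma sqnorm_nonneg (x : E) : 0 ≤ sqnorm n x :=
  Finset.sum_nonneg fun i _ => mul_self_nonneg _

/-- One-sided maximum principle. -/
lemma maxprin_le {Ω : Set E} (hn : 0 < n) (hΩo : IsOpen Ω)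
    (hΩb : Bornology.IsBounded Ω) {h : E → ℝ} (hh : ContDiff ℝ (⊤ : ℕ∞) h)
    (harm : ∀ x ∈ Ω, eucLap h x = 0) (bd : ∀ x ∈ frontier Ω, h x = 0) :
    ∀ x ∈ closure Ω, h x ≤ 0 := by
  intro x hx
  have hK : IsCompact (closure Ω) :=
    Metric.isCompact_of_isClosed_isBounded isClosed_closure hΩb.closure
  have hKne : (closure Ω).Nonempty := ⟨x, hx⟩
  obtain ⟨x₁, hx₁, hC1'⟩ := hK.exists_isMaxOn hKne
    (sqnorm_contDiff.continuous.continuousOn (s := closure Ω))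
  have hC1 : ∀ y ∈ closure Ω, sqnorm n y ≤ sqnorm n x₁ := fun y hy => hC1' hy
  have hC0 : 0 ≤ sqnorm n x₁ := sqnorm_nonneg x₁
  have key : ∀ ε : ℝ, 0 < ε → h x ≤ ε * sqnorm n x₁ := by
    intro ε hε
    set u : E → ℝ := fun y => h y + ε * sqnorm n y with hu
    have huC : ContDiff ℝ (⊤ : ℕ∞) u := hh.add (contDiff_const.mul sqnorm_contDiff)
    obtain ⟨x₀, hx₀K, hx₀max⟩ := hK.exists_isMaxOn hKne huC.continuous.continuousOn
    have hx₀f : x₀ ∉ Ω := by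
      intro hmem
      have hloc : IsLocalMax u x₀ := by
        filter_upwards [hΩo.mem_nhds hmem] with y hy
        exact hx₀max (subset_closure hy)
      have hle := eucLap_localmax huC hloc
      have heq : eucLap u x₀ = 0 + ε * (2 * n) := by
        rw [hu]
        rw [eucLap_add hh (contDiff_const.mul sqnorm_contDiff),
          eucLap_cmul sqnorm_contDiff, harm x₀ hmem, eucLap_sqnorm]
      rw [heq] at hle
      have hnr : (0:ℝ) < (n:ℝ) := Nat.cast_pos.mpr hn
      have hpos : (0:ℝ) < ε * (2 * n) := by
        apply mul_pos hε
        linarith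
      linarith
    have hx₀fr : x₀ ∈ frontier Ω := by
      rw [hΩo.frontier_eq]
      exact ⟨hx₀K, hx₀f⟩
    have h1 : h x ≤ u x := by
      have h0 : 0 ≤ ε * sqnorm n x := mul_nonneg hε.le (sqnorm_nonneg x)
      simp only [hu]; linarith
    have h2 : u x ≤ u x₀ := hx₀max hx
    have h3 : u x₀ ≤ ε * sqnorm n x₁ := by
      simp only [hu, bd x₀ hx₀fr, zero_add]
      exact mul_le_mul_of_nonneg_left (hC1 x₀ hx₀K) hε.le
    linarith
  by_contra hcon
  push_neg at hcon
  rcases eq_or_lt_of_le hC0 with hC0' | hC0'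
  · have := key 1 one_pos
    rw [← hC0'] at this
    simp at this
    linarith
  · have := key (h x / (2 * sqnorm n x₁)) (by positivity)
    have h4 : h x / (2 * sqnorm n x₁) * sqnorm n x₁ = h x / 2 := by
      field_simp
    rw [h4] at this
    linarith

/-- Two-sided maximum principle: a harmonic function vanishing on the boundary vanishes
on the closure. -/
lemma maxprin {Ω : Set E} (hn : 0 < n) (hΩo : IsOpen Ω)
    (hΩb : Bornology.IsBounded Ω) {h : E → ℝ} (hh : ContDiff ℝ (⊤ : ℕ∞) h)
    (harm : ∀ x ∈ Ω, eucLap h x = 0) (bd : ∀ x ∈ frontier Ω, h x = 0) :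
    ∀ x ∈ closure Ω, h x = 0 := by
  intro x hx
  have hle := maxprin_le hn hΩo hΩb hh harm bd x hx
  have hge := maxprin_le hn hΩo hΩb (hh.neg)
    (fun z hz => by rw [show (fun y => -h y) = fun y => -h y from rfl, eucLap_neg hh, harm z hz,
      neg_zero])
    (fun z hz => by rw [bd z hz, neg_zero]) x hx
  simp only [neg_nonpos] at hge
  linarith [hge]

/-- The derivative of a smooth function vanishing on an open set vanishes on its closure. -/
lemma fderiv_zero_closure {Ω : Set E} (hΩo : IsOpen Ω) {h : E → ℝ} (hh : ContDiff ℝ (⊤ : ℕ∞) h)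
    (hzero : ∀ x ∈ Ω, h x = 0) :
    ∀ x ∈ closure Ω, fderiv ℝ h x = 0 := by
  have heqon : Set.EqOn (fun y => fderiv ℝ h y) (fun _ => (0 : _ →L[ℝ] ℝ)) Ω := by
    intro y hy
    have hev : h =ᶠ[nhds y] (fun _ => (0:ℝ)) :=
      Filter.eventuallyEq_of_mem (hΩo.mem_nhds hy) hzero
    show fderiv ℝ h y = 0
    rw [hev.fderiv_eq, fderiv_fun_const]
    rfl
  exact heqon.closure ((hh.fderiv_right (m := (⊤ : ℕ∞)) (by simp)).continuous) continuous_const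

end Stmt10Aux

open Stmt10Aux in
/-- Let `Ω ⊂ ℝⁿ` be a bounded smooth domain, `f` a smooth function on
`∂Ω` with harmonic extension `fH`, `𝒩` the Dirichlet-Neumann operator (`𝒩(f) = ∂_ν fH`,
with `q` the harmonic extension of `𝒩(f)`, so that `𝒩²f = ∂_ν q`), `κ` the mean
curvature, and `NH` the harmonic extension of the unit normal `ν`.  Then on `∂Ω`:
`(-Δ_{∂Ω} - 𝒩²) f = κ 𝒩(f) - 2 ∂_ν (-Δ)⁻¹(DNH · D²fH) - 𝒩(N) · (𝒩(f) ν + ∇^⊤ f)`,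
where `Δ_{∂Ω} f` is expressed through the identity
`Δψ = Δ_{∂Ω}ψ + κ ∂_ν ψ + D²ψ(ν,ν)` applied to `ψ = fH` (hypothesis `hLS`), and
`b = (-Δ)⁻¹(DNH · D²fH)`. -/
theorem stmt_10 {n : ℕ} (Ω : Set (EuclideanSpace ℝ (Fin n)))
    (hΩo : IsOpen Ω) (hΩb : Bornology.IsBounded Ω)
    (fH q b : EuclideanSpace ℝ (Fin n) → ℝ)
    (NH ν : EuclideanSpace ℝ (Fin n) → EuclideanSpace ℝ (Fin n))
    (κb LS : EuclideanSpace ℝ (Fin n) → ℝ)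
    (hfH : ContDiff ℝ (⊤ : ℕ∞) fH) (hq : ContDiff ℝ (⊤ : ℕ∞) q) (hb : ContDiff ℝ (⊤ : ℕ∞) b)
    (hNH : ContDiff ℝ (⊤ : ℕ∞) NH)
    -- `ν` is the outward unit normal on `∂Ω`:
    (hν : ∀ x ∈ frontier Ω, ‖ν x‖ = 1)
    -- `fH` is harmonic in `Ω`:
    (hfharm : ∀ x ∈ Ω, eucLap fH x = 0)
    -- `q` is the harmonic extension of `𝒩(f) = ∂_ν fH`:
    (hqharm : ∀ x ∈ Ω, eucLap q x = 0)
    (hqbd : ∀ x ∈ frontier Ω, q x = fderiv ℝ fH x (ν x))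
    -- `NH` is the (componentwise) harmonic extension of the unit normal:
    (hNHharm : ∀ x ∈ Ω, ∀ j, eucLap (fun y => NH y j) x = 0)
    (hNHbd : ∀ x ∈ frontier Ω, NH x = ν x)
    -- `b = (-Δ)⁻¹(DNH · D²fH)`:
    (hbeq : ∀ x ∈ Ω,
      -eucLap b x = ∑ i, ∑ j, fderiv ℝ (fun y => NH y j) x (EuclideanSpace.single i 1) *
        fderiv ℝ (fun y => fderiv ℝ fH y (EuclideanSpace.single j 1)) x
          (EuclideanSpace.single i 1))
    (hbbd : ∀ x ∈ frontier Ω, b x = 0)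
    -- `LS` represents `Δ_{∂Ω} f` on `∂Ω`, via the identity
    -- `Δψ = Δ_{∂Ω}(ψ|_{∂Ω}) + κ ∂_ν ψ + D²ψ(ν,ν)` with `ψ = fH`:
    (hLS : ∀ x ∈ frontier Ω,
      LS x = eucLap fH x - κb x * fderiv ℝ fH x (ν x)
        - fderiv ℝ (fun y => fderiv ℝ fH y (ν x)) x (ν x)) :
    ∀ x ∈ frontier Ω,
      -LS x - fderiv ℝ q x (ν x)
        = κb x * fderiv ℝ fH x (ν x) - 2 * fderiv ℝ b x (ν x)
          - ⟪fderiv ℝ NH x (ν x),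
              (fderiv ℝ fH x (ν x)) • ν x
                + (gradient fH x - ⟪gradient fH x, ν x⟫ • ν x)⟫ := by
  intro x hx
  have hxc : x ∈ closure Ω := frontier_subset_closure hx
  -- the dimension is positive
  have hn : 0 < n := by
    rcases Nat.eq_zero_or_pos n with h0 | h
    · exfalso
      subst h0
      haveI : Subsingleton (EuclideanSpace ℝ (Fin 0)) :=
        ⟨fun a b => by ext i; exact i.elim0⟩
      rcases Set.eq_empty_or_nonempty Ω with hΩ | hΩ
      · rw [hΩ, frontier_empty] at hx; exact hx
      · obtain ⟨z, hz⟩ := hΩ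
        have hu : Ω = Set.univ := Set.eq_univ_of_forall fun y => by rwa [Subsingleton.elim y z]
        rw [hu, frontier_univ] at hx; exact hx
    · exact h
  -- smoothness of components
  have hNHj : ∀ j : Fin n, ContDiff ℝ (⊤ : ℕ∞) (fun y => NH y j) := fun j =>
    ((EuclideanSpace.proj j : EuclideanSpace ℝ (Fin n) →L[ℝ] ℝ).contDiff).comp hNH
  have hwj : ∀ j : Fin n, ContDiff ℝ (⊤ : ℕ∞)
      (fun y => fderiv ℝ fH y (EuclideanSpace.single j 1)) := fun j => dcont hfH _
  have hgC : ContDiff ℝ (⊤ : ℕ∞)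
      (fun y => ∑ j, NH y j * fderiv ℝ fH y (EuclideanSpace.single j 1)) :=
    ContDiff.sum fun j _ => (hNHj j).mul (hwj j)
  have hhC : ContDiff ℝ (⊤ : ℕ∞) (fun y => q y
      - ((∑ j, NH y j * fderiv ℝ fH y (EuclideanSpace.single j 1)) + 2 * b y)) :=
    hq.sub (hgC.add (contDiff_const.mul hb))
  -- the auxiliary function is harmonic on Ω
  have harm_h : ∀ z ∈ Ω, eucLap (fun y => q y
      - ((∑ j, NH y j * fderiv ℝ fH y (EuclideanSpace.single j 1)) + 2 * b y)) z = 0 := by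
    intro z hz
    rw [eucLap_sub hq (hgC.add (contDiff_const.mul hb)) z,
      eucLap_add hgC (contDiff_const.mul hb) z, eucLap_cmul hb 2 z, hqharm z hz]
    have hgap : eucLap
        (fun y => ∑ j, NH y j * fderiv ℝ fH y (EuclideanSpace.single j 1)) z
        = 2 * (-eucLap b z) := by
      rw [eucLap_sum Finset.univ _ (fun j _ => (hNHj j).mul (hwj j)) z]
      have term : ∀ j : Fin n,
          eucLap (fun y => NH y j * fderiv ℝ fH y (EuclideanSpace.single j 1)) z
            = 2 * ∑ i, fderiv ℝ (fun y => NH y j) z (EuclideanSpace.single i 1)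
                * fderiv ℝ (fun y => fderiv ℝ fH y (EuclideanSpace.single j 1)) z
                  (EuclideanSpace.single i 1) := by
        intro j
        rw [eucLap_mul (hNHj j) (hwj j) z, hNHharm z hz j,
          eucLap_fderiv_zero hfH hΩo hfharm _ z hz]
        ring
      rw [Finset.sum_congr rfl fun j _ => term j, ← Finset.mul_sum, Finset.sum_comm,
        ← hbeq z hz]
    rw [hgap]
    ring
  -- boundary values of the auxiliary function
  have bd_h : ∀ z ∈ frontier Ω, (fun y => q y
      - ((∑ j, NH y j * fderiv ℝ fH y (EuclideanSpace.single j 1)) + 2 * b y)) z = 0 := by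
    intro z hz
    have hg0 : (∑ j, NH z j * fderiv ℝ fH z (EuclideanSpace.single j 1))
        = fderiv ℝ fH z (ν z) := by
      simp only [hNHbd z hz]
      exact (fderiv_dir (ν z)).symm
    simp only [hg0, hqbd z hz, hbbd z hz]
    ring
  -- maximum principle: the auxiliary function vanishes identically on the closure
  have hzero : ∀ z ∈ closure Ω, (fun y => q y
      - ((∑ j, NH y j * fderiv ℝ fH y (EuclideanSpace.single j 1)) + 2 * b y)) z = 0 :=
    maxprin hn hΩo hΩb hhC harm_h bd_h
  -- hence the derivative vanishes at x
  have hD : fderiv ℝ (fun y => q y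
      - ((∑ j, NH y j * fderiv ℝ fH y (EuclideanSpace.single j 1)) + 2 * b y)) x = 0 :=
    fderiv_zero_closure hΩo hhC (fun z hz => hzero z (subset_closure hz)) x hxc
  -- split the derivative
  have hqd : DifferentiableAt ℝ q x := hq.differentiable (by simp) x
  have hgd : DifferentiableAt ℝ
      (fun y => ∑ j, NH y j * fderiv ℝ fH y (EuclideanSpace.single j 1)) x :=
    hgC.differentiable (by simp) x
  have hbd2 : DifferentiableAt ℝ (fun y => 2 * b y) x :=
    (hb.differentiable (by simp) x).const_mul 2
  have hsplit : fderiv ℝ q x (ν x)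
      = fderiv ℝ (fun y => ∑ j, NH y j * fderiv ℝ fH y (EuclideanSpace.single j 1)) x (ν x)
        + 2 * fderiv ℝ b x (ν x) := by
    have h1 := fderiv_fun_sub hqd (hgd.fun_add hbd2)
    rw [hD] at h1
    have h2 := fderiv_fun_add hgd hbd2
    have h3 := fderiv_const_mul (hb.differentiable (by simp) x) (2:ℝ)
    have := congrArg (fun L => L (ν x)) h1
    simp only [ContinuousLinearMap.zero_apply, ContinuousLinearMap.sub_apply] at this
    have := this.symm
    rw [h2] at this
    simp only [ContinuousLinearMap.add_apply] at this
    rw [h3] at this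
    simp only [ContinuousLinearMap.smul_apply, smul_eq_mul] at this
    linarith [sub_eq_zero.mp this]
  -- compute the derivative of g at x
  have hgder : fderiv ℝ
      (fun y => ∑ j, NH y j * fderiv ℝ fH y (EuclideanSpace.single j 1)) x (ν x)
      = ∑ j, (NH x j * fderiv ℝ (fun y => fderiv ℝ fH y (EuclideanSpace.single j 1)) x (ν x)
          + fderiv ℝ fH x (EuclideanSpace.single j 1)
            * fderiv ℝ (fun y => NH y j) x (ν x)) := by
    rw [fderiv_fun_sum fun j _ => ((hNHj j).differentiable (by simp) x).fun_mul
      ((hwj j).differentiable (by simp) x)]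
    rw [ContinuousLinearMap.sum_apply]
    refine Finset.sum_congr rfl fun j _ => ?_
    rw [fderiv_fun_mul ((hNHj j).differentiable (by simp) x) ((hwj j).differentiable (by simp) x)]
    simp only [ContinuousLinearMap.add_apply, ContinuousLinearMap.smul_apply, smul_eq_mul]
  -- first piece gives the second normal derivative
  have hT : ∑ j, (ν x) j
        * fderiv ℝ (fun y => fderiv ℝ fH y (EuclideanSpace.single j 1)) x (ν x)
      = fderiv ℝ (fun y => fderiv ℝ fH y (ν x)) x (ν x) := by
    have hfun : (fun y => fderiv ℝ fH y (ν x))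
        = fun y => ∑ j, (ν x) j * fderiv ℝ fH y (EuclideanSpace.single j 1) :=
      funext fun y => fderiv_dir (ν x)
    rw [hfun, fderiv_fun_sum fun j _ => ((hwj j).differentiable (by simp) x).const_mul _]
    rw [ContinuousLinearMap.sum_apply]
    refine (Finset.sum_congr rfl fun j _ => ?_).symm
    rw [fderiv_const_mul ((hwj j).differentiable (by simp) x)]
    simp only [ContinuousLinearMap.smul_apply, smul_eq_mul]
  -- second piece gives the inner product with the gradient
  have compj : ∀ j : Fin n, fderiv ℝ NH x (ν x) j
      = fderiv ℝ (fun y => NH y j) x (ν x) := by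
    intro j
    have hcomp : fderiv ℝ (fun y => (EuclideanSpace.proj j :
          EuclideanSpace ℝ (Fin n) →L[ℝ] ℝ) (NH y)) x
        = (EuclideanSpace.proj j : EuclideanSpace ℝ (Fin n) →L[ℝ] ℝ).comp (fderiv ℝ NH x) :=
      ((EuclideanSpace.proj j : EuclideanSpace ℝ (Fin n) →L[ℝ] ℝ).hasFDerivAt.comp x
        (hNH.differentiable (by simp) x).hasFDerivAt).fderiv
    have := congrArg (fun L => L (ν x)) hcomp
    simp only [ContinuousLinearMap.coe_comp', Function.comp_apply] at this
    exact this.symm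
  have hgrad_inner : ∀ v : EuclideanSpace ℝ (Fin n), ⟪gradient fH x, v⟫ = fderiv ℝ fH x v := by
    intro v
    show ⟪(InnerProductSpace.toDual ℝ (EuclideanSpace ℝ (Fin n))).symm (fderiv ℝ fH x), v⟫
      = fderiv ℝ fH x v
    exact InnerProductSpace.toDual_symm_apply
  have gradj : ∀ j : Fin n, gradient fH x j = fderiv ℝ fH x (EuclideanSpace.single j 1) := by
    intro j
    have h1 := hgrad_inner (EuclideanSpace.single j 1)
    rw [EuclideanSpace.inner_single_right] at h1
    simpa using h1
  have hP : ∑ j, fderiv ℝ fH x (EuclideanSpace.single j 1)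
        * fderiv ℝ (fun y => NH y j) x (ν x)
      = ⟪fderiv ℝ NH x (ν x), gradient fH x⟫ := by
    rw [PiLp.inner_apply]
    refine (Finset.sum_congr rfl fun j _ => ?_).symm
    rw [compj j, gradj j]
    simp [RCLike.inner_apply, mul_comm]
  -- the right-hand side inner product collapses to the gradient
  have hRHS : ⟪fderiv ℝ NH x (ν x),
        (fderiv ℝ fH x (ν x)) • ν x
          + (gradient fH x - ⟪gradient fH x, ν x⟫ • ν x)⟫
      = ⟪fderiv ℝ NH x (ν x), gradient fH x⟫ := by
    rw [hgrad_inner (ν x)]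
    congr 1
    abel
  -- Laplacian of fH vanishes on the closure
  have hlap0 : eucLap fH x = 0 := by
    have heq : Set.EqOn (eucLap fH) (fun _ => (0:ℝ)) Ω := fun z hz => hfharm z hz
    exact heq.closure (eucLap_continuous hfH) continuous_const hxc
  -- put everything together
  have hgfinal : fderiv ℝ
      (fun y => ∑ j, NH y j * fderiv ℝ fH y (EuclideanSpace.single j 1)) x (ν x)
      = fderiv ℝ (fun y => fderiv ℝ fH y (ν x)) x (ν x)
        + ⟪fderiv ℝ NH x (ν x), gradient fH x⟫ := by
    rw [hgder, Finset.sum_add_distrib]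
    simp only [hNHbd x hx]
    rw [hT, hP]
  rw [hLS x hx, hRHS, hlap0, hsplit, hgfinal]
  ring
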